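/- arXiv:2104.06384 — 3 statements merged into one kernel-verified Lean document; each statement's English description precedes it below -/
import Mathlib

section
/- Let d ≥ 1, let Σ be a d×d real positive definite matrix, let λ > 0, let Z be a random vector with distribution N(0, Σ) and ε an independent random vector with distribution N(0, I_d), and set Z' := Z + λε. Then E[‖Z' − Z‖²_{Σ⁻¹} · min{1, φ(Z'; 0, Σ)/φ(Z; 0, Σ)}] = 2λ² · E[‖ε‖²_{Σ⁻¹} · Φ(−λ‖ε‖_{Σ⁻¹}/2)]. (This is the ESJD formula of Corollary 1 for a random-walk Metropolis chain started in stationarity at a centered Gaussian target with covariance Σ and identity proposal matrix M = I.) -/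
open MeasureTheory ProbabilityTheory Real Matrix Filter

/-- CDF of the standard normal distribution. -/
noncomputable def stdNormalCDF (x : ℝ) : ℝ :=
  ((gaussianReal 0 1) (Set.Iic x)).toReal

/-- Quadratic form `vᵀ A v`. -/
noncomputable def quadForm {d : ℕ} (A : Matrix (Fin d) (Fin d) ℝ) (v : Fin d → ℝ) : ℝ :=
  v ⬝ᵥ (A *ᵥ v)

/-- Density of the `d`-dimensional Gaussian with mean `μ` and covariance `S`. -/
noncomputable def mvGaussianPdf {d : ℕ} (μ : Fin d → ℝ) (S : Matrix (Fin d) (Fin d) ℝ)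
    (x : Fin d → ℝ) : ℝ :=
  (2 * Real.pi) ^ (-(d : ℝ) / 2) * S.det ^ (-(1 : ℝ) / 2) *
    Real.exp (-((x - μ) ⬝ᵥ (S⁻¹ *ᵥ (x - μ))) / 2)

/-- The `d`-dimensional Gaussian distribution `N(μ, S)`. -/
noncomputable def mvGaussian {d : ℕ} (μ : Fin d → ℝ) (S : Matrix (Fin d) (Fin d) ℝ) :
    Measure (Fin d → ℝ) :=
  volume.withDensity (fun x => ENNReal.ofReal (mvGaussianPdf μ S x))

/-!
Conditioning on `ε` reduces the identity to a fixed increment `c = λ ε`. For `Z ~ N(0, Σ)` the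
log acceptance ratio `log φ(Z + c) / φ(Z) = -(Σ⁻¹ c) ⬝ Z - q / 2`, `q = ‖c‖²_{Σ⁻¹}`, is a linear
functional of a Gaussian, hence `N(-q/2, q)`: writing `Σ = A Aᵀ`, `N(0, Σ)` is the image of
`N(0, I)` under `A`, and `N(0, I)` is Mathlib's standard Gaussian. For `X ~ N(-q/2, q)`,
`E[min(1, e^X)] = P(X ≥ 0) + E[e^X; X < 0] = 2 Φ(-√q/2)`, since tilting by `e^X` maps
`N(-q/2, q)` to `N(q/2, q)`.
-/

open Set
open scoped NNReal ENNReal MatrixOrder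

section GaussianReal

variable {v : ℝ≥0}

lemma stdNormalCDF_nonneg (x : ℝ) : 0 ≤ stdNormalCDF x := ENNReal.toReal_nonneg

lemma measurable_stdNormalCDF : Measurable stdNormalCDF :=
  Monotone.measurable fun _ _ hxy =>
    ENNReal.toReal_mono (measure_ne_top _ _) (measure_mono (Iic_subset_Iic.2 hxy))

lemma gaussianReal_eq_map_affine (m : ℝ) (v : ℝ≥0) :
    gaussianReal m v = (gaussianReal 0 1).map (fun x => √(v : ℝ) * x + m) := by
  have hscale : (gaussianReal 0 1).map (√(v : ℝ) * ·) = gaussianReal 0 v := by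
    rw [gaussianReal_map_const_mul, mul_zero, mul_one]
    congr 1
    exact NNReal.eq (by simp)
  rw [show (fun x => √(v : ℝ) * x + m) = (· + m) ∘ (√(v : ℝ) * ·) from rfl,
    ← Measure.map_map (measurable_add_const m) (measurable_const_mul _), hscale,
    gaussianReal_map_add_const, zero_add]

lemma ofReal_stdNormalCDF (x : ℝ) :
    ENNReal.ofReal (stdNormalCDF x) = gaussianReal 0 1 (Iic x) :=
  ENNReal.ofReal_toReal (measure_ne_top _ _)

lemma gaussianReal_Iic (m : ℝ) (hv : v ≠ 0) (t : ℝ) :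
    gaussianReal m v (Iic t) = ENNReal.ofReal (stdNormalCDF ((t - m) / √(v : ℝ))) := by
  have hσ : 0 < √(v : ℝ) := Real.sqrt_pos.2 (by positivity)
  have hpre : (fun x => √(v : ℝ) * x + m) ⁻¹' Iic t = Iic ((t - m) / √(v : ℝ)) := by
    ext x
    simp only [mem_preimage, mem_Iic, le_div_iff₀ hσ]
    constructor <;> intro h <;> linarith
  rw [ofReal_stdNormalCDF, gaussianReal_eq_map_affine,
    Measure.map_apply (by fun_prop) measurableSet_Iic, hpre]

lemma gaussianReal_Iio (m : ℝ) (hv : v ≠ 0) (t : ℝ) :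
    gaussianReal m v (Iio t) = ENNReal.ofReal (stdNormalCDF ((t - m) / √(v : ℝ))) := by
  have := nullSingletonClass_gaussianReal (μ := m) hv
  rw [measure_congr Iio_ae_eq_Iic, gaussianReal_Iic m hv]

lemma gaussianReal_Ici (m : ℝ) (hv : v ≠ 0) (t : ℝ) :
    gaussianReal m v (Ici t) = ENNReal.ofReal (stdNormalCDF ((m - t) / √(v : ℝ))) := by
  rw [← neg_neg m, ← gaussianReal_map_neg, Measure.map_apply measurable_neg measurableSet_Ici,
    show (fun x : ℝ => -x) ⁻¹' Ici t = Iic (-t) by ext; simp,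
    gaussianReal_Iic _ hv, neg_neg, sub_neg_eq_add, neg_add_eq_sub]

lemma exp_mul_mul_gaussianPDFReal (m : ℝ) (v : ℝ≥0) (t x : ℝ) :
    rexp (t * x) * gaussianPDFReal m v x
      = rexp (t * m + v * t ^ 2 / 2) * gaussianPDFReal (m + v * t) v x := by
  rcases eq_or_ne v 0 with rfl | hv
  · simp [gaussianPDFReal_zero_var]
  simp only [gaussianPDFReal]
  rw [mul_left_comm, ← Real.exp_add, mul_left_comm (rexp _), ← Real.exp_add]
  congr 2
  field_simp
  ring

lemma withDensity_exp_mul_gaussianReal (m : ℝ) (hv : v ≠ 0) (t : ℝ) :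
    (gaussianReal m v).withDensity (fun x => ENNReal.ofReal (rexp (t * x)))
      = ENNReal.ofReal (rexp (t * m + v * t ^ 2 / 2)) • gaussianReal (m + v * t) v := by
  rw [gaussianReal_of_var_ne_zero _ hv, gaussianReal_of_var_ne_zero _ hv,
    ← withDensity_mul _ (measurable_gaussianPDF _ _) (by fun_prop),
    ← withDensity_smul _ (measurable_gaussianPDF _ _)]
  congr 1
  ext x
  simp only [Pi.mul_apply, Pi.smul_apply, smul_eq_mul, gaussianPDF]
  rw [← ENNReal.ofReal_mul (gaussianPDFReal_nonneg _ _ _), ← ENNReal.ofReal_mul (by positivity),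
    mul_comm, exp_mul_mul_gaussianPDFReal]

lemma lintegral_min_one_exp_gaussianReal (hv : v ≠ 0) :
    ∫⁻ x, ENNReal.ofReal (min 1 (rexp x)) ∂gaussianReal (-(v / 2)) v
      = ENNReal.ofReal (2 * stdNormalCDF (-(√(v : ℝ) / 2))) := by
  have hhalf : (v : ℝ) / 2 / √(v : ℝ) = √(v : ℝ) / 2 := by
    rw [div_right_comm, Real.div_sqrt]
  have hIci : ∫⁻ x in Ici 0, ENNReal.ofReal (min 1 (rexp x)) ∂gaussianReal (-(v / 2)) v
      = gaussianReal (-(v / 2)) v (Ici 0) := by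
    rw [← setLIntegral_one]
    refine setLIntegral_congr_fun measurableSet_Ici fun x hx => ?_
    rw [min_eq_left (Real.one_le_exp (mem_Ici.1 hx)), ENNReal.ofReal_one]
  have hIio : ∫⁻ x in Iio 0, ENNReal.ofReal (min 1 (rexp x)) ∂gaussianReal (-(v / 2)) v
      = gaussianReal (v / 2) v (Iio 0) := by
    have htilt := withDensity_exp_mul_gaussianReal (-(v / 2)) hv 1
    rw [show (1 : ℝ) * -(v / 2) + v * 1 ^ 2 / 2 = 0 by ring,
      show -((v : ℝ) / 2) + v * 1 = v / 2 by ring, Real.exp_zero, ENNReal.ofReal_one,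
      one_smul] at htilt
    rw [← htilt, withDensity_apply _ measurableSet_Iio]
    refine setLIntegral_congr_fun measurableSet_Iio fun x hx => ?_
    rw [one_mul, min_eq_right (Real.exp_le_one_iff.2 (mem_Iio.1 hx).le)]
  rw [← lintegral_add_compl _ measurableSet_Ici, compl_Ici, hIci, hIio, gaussianReal_Ici _ hv,
    gaussianReal_Iio _ hv, ← ENNReal.ofReal_add (stdNormalCDF_nonneg _) (stdNormalCDF_nonneg _),
    zero_sub, sub_zero, neg_div, hhalf, ← two_mul]

end GaussianReal

section MvGaussian

variable {d : ℕ}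

lemma measurable_mvGaussianPdf (μ : Fin d → ℝ) (S : Matrix (Fin d) (Fin d) ℝ) :
    Measurable (mvGaussianPdf μ S) := by
  unfold mvGaussianPdf mulVec dotProduct
  fun_prop

lemma mvGaussianPdf_zero_one (x : Fin d → ℝ) :
    mvGaussianPdf 0 1 x = ∏ i, gaussianPDFReal 0 1 (x i) := by
  simp only [mvGaussianPdf, gaussianPDFReal, det_one, Real.one_rpow, inv_one, one_mulVec,
    sub_zero, mul_one, NNReal.coe_one, Finset.prod_mul_distrib, Finset.prod_const,
    Finset.card_univ, Fintype.card_fin, ← Real.exp_sum]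
  congr 1
  · rw [Real.sqrt_eq_rpow, ← Real.rpow_neg (by positivity), ← Real.rpow_mul_natCast (by positivity)]
    ring_nf
  · simp only [dotProduct, Finset.sum_neg_distrib, Finset.sum_div, neg_div, sq]

lemma mvGaussian_zero_one_eq_pi :
    mvGaussian (0 : Fin d → ℝ) 1 = Measure.pi fun _ => gaussianReal 0 1 := by
  refine (Measure.pi_eq fun s hs => ?_).symm
  have hint : ∀ i, Integrable (gaussianPDFReal 0 1) (volume.restrict (s i)) :=
    fun i => (integrable_gaussianPDFReal 0 1).restrict
  have hnonneg : ∀ x, 0 ≤ gaussianPDFReal 0 1 x := gaussianPDFReal_nonneg 0 1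
  rw [mvGaussian, withDensity_apply _ (MeasurableSet.univ_pi hs), volume_pi,
    Measure.restrict_pi_pi]
  simp_rw [mvGaussianPdf_zero_one]
  rw [← ofReal_integral_eq_lintegral_ofReal (Integrable.fintype_prod hint)
      (ae_of_all _ fun x => Finset.prod_nonneg fun i _ => hnonneg _),
    integral_fintype_prod_eq_prod,
    ENNReal.ofReal_prod_of_nonneg fun i _ => integral_nonneg hnonneg]
  refine Finset.prod_congr rfl fun i _ => ?_
  rw [ofReal_integral_eq_lintegral_ofReal (hint i) (ae_of_all _ hnonneg),
    gaussianReal_apply _ one_ne_zero]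
  rfl

lemma map_dotProduct_mvGaussian_zero_one (b : Fin d → ℝ) :
    (mvGaussian 0 1).map (b ⬝ᵥ ·) = gaussianReal 0 (b ⬝ᵥ b).toNNReal := by
  set L : StrongDual ℝ (EuclideanSpace ℝ (Fin d)) := innerSL ℝ (WithLp.toLp 2 b)
  have hL : (b ⬝ᵥ ·) = L ∘ WithLp.toLp 2 := by
    ext u
    simp [L, EuclideanSpace.inner_toLp_toLp, dotProduct_comm]
  rw [mvGaussian_zero_one_eq_pi, hL, ← Measure.map_map L.continuous.measurable (by fun_prop),
    map_pi_eq_stdGaussian, IsGaussian.map_eq_gaussianReal, integral_strongDual_stdGaussian,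
    variance_dual_stdGaussian, innerSL_apply_norm, EuclideanSpace.real_norm_sq_eq]
  simp [dotProduct, sq]

lemma mulVec_dotProduct_mulVec_inv_mul_transpose {A : Matrix (Fin d) (Fin d) ℝ} (hA : A.det ≠ 0)
    (u : Fin d → ℝ) : (A *ᵥ u) ⬝ᵥ ((A * Aᵀ)⁻¹ *ᵥ (A *ᵥ u)) = u ⬝ᵥ u := by
  have hunit : IsUnit A.det := hA.isUnit
  have hunitT : IsUnit Aᵀ.det := by rwa [det_transpose]
  have hcancel : Aᵀ * (A * Aᵀ)⁻¹ * A = 1 := by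
    rw [Matrix.mul_inv_rev, ← Matrix.mul_assoc, Matrix.mul_nonsing_inv _ hunitT, Matrix.one_mul,
      Matrix.nonsing_inv_mul _ hunit]
  rw [dotProduct_mulVec, vecMul_mulVec, dotProduct_mulVec, vecMul_vecMul, hcancel, vecMul_one]

lemma abs_det_mul_mvGaussianPdf_mulVec {A : Matrix (Fin d) (Fin d) ℝ} (hA : A.det ≠ 0)
    (u : Fin d → ℝ) : |A.det| * mvGaussianPdf 0 (A * Aᵀ) (A *ᵥ u) = mvGaussianPdf 0 1 u := by
  have hdet : (A * Aᵀ).det ^ (-(1 : ℝ) / 2) = |A.det|⁻¹ := by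
    rw [det_mul, det_transpose, ← abs_mul_abs_self, ← sq, ← Real.rpow_natCast,
      ← Real.rpow_mul (abs_nonneg _)]
    norm_num [Real.rpow_neg_one]
  simp only [mvGaussianPdf, sub_zero, hdet, mulVec_dotProduct_mulVec_inv_mul_transpose hA,
    det_one, Real.one_rpow, inv_one, one_mulVec, mul_one]
  field_simp

lemma mvGaussian_zero_mul_transpose {A : Matrix (Fin d) (Fin d) ℝ} (hA : A.det ≠ 0) :
    mvGaussian 0 (A * Aᵀ) = (mvGaussian 0 1).map (A *ᵥ ·) := by
  have hT : Measurable (A *ᵥ · : (Fin d → ℝ) → Fin d → ℝ) := by fun_prop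
  have hvol : (volume : Measure (Fin d → ℝ)) = ENNReal.ofReal |A.det| • volume.map (A *ᵥ ·) := by
    rw [show (A *ᵥ · : (Fin d → ℝ) → Fin d → ℝ) = toLin' A from rfl,
      Real.map_matrix_volume_pi_eq_smul_volume_pi hA, smul_smul,
      ← ENNReal.ofReal_mul (abs_nonneg _), abs_inv, mul_inv_cancel₀ (abs_ne_zero.2 hA), ENNReal.ofReal_one, one_smul]
  ext s hs
  rw [Measure.map_apply hT hs, mvGaussian, mvGaussian, withDensity_apply _ hs,
    withDensity_apply _ (hT hs)]
  conv_lhs => rw [hvol]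
  have hf := (measurable_mvGaussianPdf 0 (A * Aᵀ)).ennreal_ofReal
  rw [Measure.restrict_smul, lintegral_smul_measure, setLIntegral_map hs hf hT, smul_eq_mul,
    ← lintegral_const_mul' _ _ ENNReal.ofReal_ne_top]
  refine lintegral_congr fun u => ?_
  rw [← ENNReal.ofReal_mul (abs_nonneg _), abs_det_mul_mvGaussianPdf_mulVec hA]

lemma Matrix.PosDef.exists_mul_transpose_eq {n : Type*} [Fintype n] [DecidableEq n]
    {S : Matrix n n ℝ} (hS : S.PosDef) : ∃ A : Matrix n n ℝ, A.det ≠ 0 ∧ A * Aᵀ = S := by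
  have hsq : CFC.sqrt S * CFC.sqrt S = S := CFC.sqrt_mul_sqrt_self S hS.posSemidef.nonneg
  have hsymm : (CFC.sqrt S)ᵀ = CFC.sqrt S := by
    simpa [Matrix.IsHermitian, conjTranspose_eq_transpose_of_trivial]
      using (CFC.sqrt_nonneg S).posSemidef.1
  refine ⟨CFC.sqrt S, fun h => hS.det_pos.ne' ?_, by rw [hsymm, hsq]⟩
  rw [← hsq, det_mul, h, zero_mul]

lemma map_dotProduct_mvGaussian {S : Matrix (Fin d) (Fin d) ℝ} (hS : S.PosDef) (w : Fin d → ℝ) :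
    (mvGaussian 0 S).map (w ⬝ᵥ ·) = gaussianReal 0 (w ⬝ᵥ (S *ᵥ w)).toNNReal := by
  obtain ⟨A, hA, rfl⟩ := hS.exists_mul_transpose_eq
  have hw : (w ⬝ᵥ ·) ∘ (A *ᵥ ·) = ((Aᵀ *ᵥ w) ⬝ᵥ ·) := by
    ext u
    simp [dotProduct_mulVec, mulVec_transpose]
  rw [mvGaussian_zero_mul_transpose hA, Measure.map_map (by fun_prop) (by fun_prop), hw,
    map_dotProduct_mvGaussian_zero_one, ← mulVec_mulVec, dotProduct_mulVec, mulVec_transpose,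
    vecMul_transpose, dotProduct_comm]

end MvGaussian

section QuadForm

variable {d : ℕ}

lemma measurable_quadForm (A : Matrix (Fin d) (Fin d) ℝ) : Measurable (quadForm A) := by
  unfold quadForm mulVec dotProduct
  fun_prop

lemma quadForm_smul (A : Matrix (Fin d) (Fin d) ℝ) (c : ℝ) (v : Fin d → ℝ) :
    quadForm A (c • v) = c ^ 2 * quadForm A v := by
  simp only [quadForm, mulVec_smul, smul_dotProduct, dotProduct_smul, smul_eq_mul]
  ring

lemma Matrix.PosSemidef.quadForm_nonneg {A : Matrix (Fin d) (Fin d) ℝ} (hA : A.PosSemidef)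
    (v : Fin d → ℝ) : 0 ≤ quadForm A v := by
  simpa [quadForm] using hA.dotProduct_mulVec_nonneg v

end QuadForm

section Acceptance

variable {d : ℕ} {S : Matrix (Fin d) (Fin d) ℝ}

/-- The Metropolis acceptance probability of the move `z ↦ z + c` for the target `N(0, S)`. -/
noncomputable def acceptanceProb (S : Matrix (Fin d) (Fin d) ℝ) (z c : Fin d → ℝ) : ℝ :=
  min 1 (mvGaussianPdf 0 S (z + c) / mvGaussianPdf 0 S z)

lemma measurable_acceptanceProb (S : Matrix (Fin d) (Fin d) ℝ) :
    Measurable (fun p : (Fin d → ℝ) × (Fin d → ℝ) => acceptanceProb S p.1 p.2) := by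
  unfold acceptanceProb
  have := measurable_mvGaussianPdf 0 S
  fun_prop

lemma acceptanceProb_eq (hS : S.PosDef) (z c : Fin d → ℝ) :
    acceptanceProb S z c = min 1 (rexp (-((S⁻¹ *ᵥ c) ⬝ᵥ z) - quadForm S⁻¹ c / 2)) := by
  have hsymm : (S⁻¹)ᵀ = S⁻¹ := by
    simpa [Matrix.IsHermitian, conjTranspose_eq_transpose_of_trivial] using hS.inv.isHermitian
  have hexpand : (z + c) ⬝ᵥ (S⁻¹ *ᵥ (z + c))
      = z ⬝ᵥ (S⁻¹ *ᵥ z) + 2 * ((S⁻¹ *ᵥ c) ⬝ᵥ z) + quadForm S⁻¹ c := by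
    have hcross : c ⬝ᵥ (S⁻¹ *ᵥ z) = (S⁻¹ *ᵥ c) ⬝ᵥ z := by
      rw [dotProduct_mulVec, ← mulVec_transpose, hsymm]
    simp only [quadForm, mulVec_add, dotProduct_add, add_dotProduct, hcross,
      dotProduct_comm z (S⁻¹ *ᵥ c)]
    ring
  have hconst : (0 : ℝ) < (2 * π) ^ (-(d : ℝ) / 2) * S.det ^ (-(1 : ℝ) / 2) := by
    have := hS.det_pos
    positivity
  simp only [acceptanceProb, mvGaussianPdf, sub_zero]
  rw [mul_div_mul_left _ _ hconst.ne', ← Real.exp_sub, hexpand]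
  ring_nf

lemma acceptanceProb_nonneg (hS : S.PosDef) (z c : Fin d → ℝ) : 0 ≤ acceptanceProb S z c := by
  rw [acceptanceProb_eq hS]
  positivity

lemma lintegral_acceptanceProb (hS : S.PosDef) {c : Fin d → ℝ} (hc : c ≠ 0) :
    ∫⁻ z, ENNReal.ofReal (acceptanceProb S z c) ∂mvGaussian 0 S
      = ENNReal.ofReal (2 * stdNormalCDF (-(√(quadForm S⁻¹ c) / 2))) := by
  set w := S⁻¹ *ᵥ c
  set q := quadForm S⁻¹ c
  have hq : 0 < q := by simpa [q, quadForm] using hS.inv.dotProduct_mulVec_pos hc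
  have hvar : w ⬝ᵥ (S *ᵥ w) = q := by
    rw [mulVec_mulVec, mul_nonsing_inv _ hS.det_pos.ne'.isUnit, one_mulVec, dotProduct_comm]
    rfl
  have hv : q.toNNReal ≠ 0 := by simpa using hq
  have hlaw : (mvGaussian 0 S).map (fun z => -(w ⬝ᵥ z) - q / 2)
      = gaussianReal (-(q.toNNReal / 2)) q.toNNReal := by
    rw [show (fun z => -(w ⬝ᵥ z) - q / 2) = (· - q / 2) ∘ (fun y => -y) ∘ (w ⬝ᵥ ·) from rfl,
      ← Measure.map_map (by fun_prop) (by fun_prop), ← Measure.map_map (by fun_prop) (by fun_prop),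
      map_dotProduct_mvGaussian hS, hvar, gaussianReal_map_neg, gaussianReal_map_sub_const,
      Real.coe_toNNReal _ hq.le, neg_zero, zero_sub]
  simp_rw [acceptanceProb_eq hS]
  rw [← lintegral_map (f := fun y => ENNReal.ofReal (min 1 (rexp y))) (by fun_prop) (by fun_prop),
    hlaw, lintegral_min_one_exp_gaussianReal hv, Real.coe_toNNReal _ hq.le]

lemma lintegral_quadForm_smul_mul_acceptanceProb (hS : S.PosDef) {lam : ℝ} (hlam : 0 ≤ lam)
    (e : Fin d → ℝ) :
    ∫⁻ z, ENNReal.ofReal (quadForm S⁻¹ (lam • e) * acceptanceProb S z (lam • e)) ∂mvGaussian 0 S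
      = ENNReal.ofReal
          (2 * lam ^ 2 * (quadForm S⁻¹ e * stdNormalCDF (-(lam * √(quadForm S⁻¹ e) / 2)))) := by
  have hq : 0 ≤ quadForm S⁻¹ (lam • e) := hS.inv.posSemidef.quadForm_nonneg _
  have hsqrt : √(quadForm S⁻¹ (lam • e)) = lam * √(quadForm S⁻¹ e) := by
    rw [quadForm_smul, Real.sqrt_mul (sq_nonneg lam), Real.sqrt_sq hlam]
  rw [show 2 * lam ^ 2 * (quadForm S⁻¹ e * stdNormalCDF (-(lam * √(quadForm S⁻¹ e) / 2)))
      = quadForm S⁻¹ (lam • e) * (2 * stdNormalCDF (-(√(quadForm S⁻¹ (lam • e)) / 2))) by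
    rw [hsqrt, quadForm_smul]; ring]
  simp_rw [ENNReal.ofReal_mul hq]
  rw [lintegral_const_mul' _ _ ENNReal.ofReal_ne_top]
  rcases eq_or_ne (lam • e) 0 with h | h
  · simp [h, quadForm]
  · rw [lintegral_acceptanceProb hS h]

end Acceptance

lemma ProbabilityTheory.IndepFun.integral_comp_eq_integral_comp {Ω α β : Type*} [MeasurableSpace Ω]
    [MeasurableSpace α] [MeasurableSpace β] {P : Measure Ω} [IsFiniteMeasure P]
    {X : Ω → α} {Y : Ω → β} (hX : Measurable X) (hY : Measurable Y) (hXY : IndepFun X Y P)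
    {F : α → β → ℝ} {g : β → ℝ} (hF : Measurable (Function.uncurry F)) (hF0 : ∀ x y, 0 ≤ F x y)
    (hg : Measurable g) (hg0 : ∀ y, 0 ≤ g y)
    (hFg : ∀ y, ∫⁻ x, ENNReal.ofReal (F x y) ∂P.map X = ENNReal.ofReal (g y)) :
    ∫ ω, F (X ω) (Y ω) ∂P = ∫ ω, g (Y ω) ∂P := by
  have hprod : P.map (fun ω => (X ω, Y ω)) = (P.map X).prod (P.map Y) :=
    (indepFun_iff_map_prod_eq_prod_map_map hX.aemeasurable hY.aemeasurable).1 hXY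
  rw [integral_eq_lintegral_of_nonneg_ae (ae_of_all _ fun ω => hF0 _ _)
      (hF.comp (hX.prodMk hY)).aestronglyMeasurable,
    integral_eq_lintegral_of_nonneg_ae (ae_of_all _ fun ω => hg0 _)
      (hg.comp hY).aestronglyMeasurable]
  congr 1
  calc ∫⁻ ω, ENNReal.ofReal (F (X ω) (Y ω)) ∂P
      = ∫⁻ p, ENNReal.ofReal (Function.uncurry F p) ∂(P.map X).prod (P.map Y) := by
        rw [← hprod, lintegral_map hF.ennreal_ofReal (hX.prodMk hY)]
        rfl
    _ = ∫⁻ y, ∫⁻ x, ENNReal.ofReal (F x y) ∂P.map X ∂P.map Y :=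
        lintegral_prod_symm _ hF.ennreal_ofReal.aemeasurable
    _ = ∫⁻ ω, ENNReal.ofReal (g (Y ω)) ∂P := by
        simp_rw [hFg]
        exact lintegral_map hg.ennreal_ofReal hY

theorem esjd_identity_proposal_general {d : ℕ}
    (S : Matrix (Fin d) (Fin d) ℝ) (hS : S.PosDef)
    (lam : ℝ) (hlam : 0 < lam)
    {Ω : Type*} [MeasureSpace Ω] [IsProbabilityMeasure (ℙ : Measure Ω)]
    (Z ε : Ω → (Fin d → ℝ)) (hZm : Measurable Z) (hεm : Measurable ε)
    (hZ : Measure.map Z ℙ = mvGaussian 0 S)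
    (hindep : IndepFun Z ε ℙ)
    (Z' : Ω → (Fin d → ℝ)) (hZ' : Z' = fun ω => Z ω + lam • ε ω) :
    ∫ ω, quadForm S⁻¹ (Z' ω - Z ω) *
        min 1 (mvGaussianPdf 0 S (Z' ω) / mvGaussianPdf 0 S (Z ω)) ∂ℙ
      = 2 * lam ^ 2 *
        ∫ ω, quadForm S⁻¹ (ε ω) *
          stdNormalCDF (-(lam * Real.sqrt (quadForm S⁻¹ (ε ω)) / 2)) ∂ℙ := by
  subst hZ'
  set F : (Fin d → ℝ) → (Fin d → ℝ) → ℝ :=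
    fun z e => quadForm S⁻¹ (lam • e) * acceptanceProb S z (lam • e)
  set g : (Fin d → ℝ) → ℝ :=
    fun e => 2 * lam ^ 2 * (quadForm S⁻¹ e * stdNormalCDF (-(lam * √(quadForm S⁻¹ e) / 2)))
  have hF : Measurable (Function.uncurry F) := by
    have := measurable_quadForm S⁻¹
    have := measurable_acceptanceProb S
    unfold F Function.uncurry
    fun_prop
  have hg : Measurable g := by
    have := measurable_quadForm S⁻¹
    have := measurable_stdNormalCDF
    fun_prop
  simp only [add_sub_cancel_left]
  rw [← integral_const_mul]
  refine hindep.integral_comp_eq_integral_comp (F := F) (g := g) hZm hεm hF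
    (fun z e => mul_nonneg (hS.inv.posSemidef.quadForm_nonneg _) (acceptanceProb_nonneg hS z _)) hg
    (fun e => by
      have := hS.inv.posSemidef.quadForm_nonneg e
      have := stdNormalCDF_nonneg (-(lam * √(quadForm S⁻¹ e) / 2))
      positivity)
    fun e => hZ ▸ lintegral_quadForm_smul_mul_acceptanceProb hS hlam.le e

/-- ESJD formula for RWM at stationarity, centered Gaussian target with covariance `S`,
identity proposal matrix: with `Z' = Z + λ ε`,
`E[‖Z' − Z‖²_{Σ⁻¹} min{1, φ(Z';0,Σ)/φ(Z;0,Σ)}] = 2λ² E[‖ε‖²_{Σ⁻¹} Φ(−λ‖ε‖_{Σ⁻¹}/2)]`. -/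
theorem esjd_identity_proposal {d : ℕ} (hd : 1 ≤ d)
    (S : Matrix (Fin d) (Fin d) ℝ) (hS : S.PosDef)
    (lam : ℝ) (hlam : 0 < lam)
    {Ω : Type*} [MeasureSpace Ω] [IsProbabilityMeasure (ℙ : Measure Ω)]
    (Z ε : Ω → (Fin d → ℝ)) (hZm : Measurable Z) (hεm : Measurable ε)
    (hZ : Measure.map Z ℙ = mvGaussian 0 S)
    (hε : Measure.map ε ℙ = mvGaussian 0 1)
    (hindep : IndepFun Z ε ℙ)
    (Z' : Ω → (Fin d → ℝ)) (hZ' : Z' = fun ω => Z ω + lam • ε ω) :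
    ∫ ω, quadForm S⁻¹ (Z' ω - Z ω) *
        min 1 (mvGaussianPdf 0 S (Z' ω) / mvGaussianPdf 0 S (Z ω)) ∂ℙ
      = 2 * lam ^ 2 *
        ∫ ω, quadForm S⁻¹ (ε ω) *
          stdNormalCDF (-(lam * Real.sqrt (quadForm S⁻¹ (ε ω)) / 2)) ∂ℙ :=
  esjd_identity_proposal_general S hS lam hlam Z ε hZm hεm hZ hindep Z' hZ'
end

section
/- For every a > 0, the function x ↦ Φ(−a·√x) is convex on [0, ∞), where Φ is the cumulative distribution function of the standard normal distribution. -/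
open MeasureTheory ProbabilityTheory Real

/-!
On `[0, ∞)` the function `t ↦ Φ(-t)` is decreasing and convex, because its derivative `-φ(t)`
increases there (the Gaussian density decreases away from its mean). The function `x ↦ a√x` is
concave and maps `[0, ∞)` onto itself, and a decreasing convex function of a concave function
is convex.
-/

open Set

lemma hasDerivAt_integral_Iic {f : ℝ → ℝ} (hf : Continuous f) (hfi : Integrable f) (x : ℝ) :
    HasDerivAt (fun y => ∫ t in Iic y, f t) (f x) x := by
  have hsplit : (fun y => ∫ t in Iic y, f t) = fun y => (∫ t in Iic 0, f t) + ∫ t in 0..y, f t := by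
    funext y
    rw [← intervalIntegral.integral_Iic_sub_Iic hfi.integrableOn hfi.integrableOn]
    ring
  rw [hsplit]
  exact (hf.integral_hasStrictDerivAt 0 x).hasDerivAt.const_add _

lemma gaussianPDFReal_zero_neg (v : NNReal) (x : ℝ) :
    gaussianPDFReal 0 v (-x) = gaussianPDFReal 0 v x := by
  simp [gaussianPDFReal]

lemma antitoneOn_gaussianPDFReal (μ : ℝ) (v : NNReal) : AntitoneOn (gaussianPDFReal μ v) (Ici μ) := by
  intro x hx y hy hxy
  have hsq : (x - μ) ^ 2 ≤ (y - μ) ^ 2 := by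
    gcongr
    exact sub_nonneg.2 hx
  unfold gaussianPDFReal
  gcongr

lemma stdNormalCDF_eq_integral (x : ℝ) :
    stdNormalCDF x = ∫ t in Iic x, gaussianPDFReal 0 1 t := by
  rw [stdNormalCDF, gaussianReal_apply_eq_integral 0 one_ne_zero,
    ENNReal.toReal_ofReal (integral_nonneg fun t => gaussianPDFReal_nonneg _ _ _)]

lemma hasDerivAt_stdNormalCDF (x : ℝ) : HasDerivAt stdNormalCDF (gaussianPDFReal 0 1 x) x := by
  have hcont : Continuous (gaussianPDFReal 0 1) := by
    rw [gaussianPDFReal_def]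
    fun_prop
  rw [funext stdNormalCDF_eq_integral]
  exact hasDerivAt_integral_Iic hcont (integrable_gaussianPDFReal 0 1) x

lemma monotone_stdNormalCDF : Monotone stdNormalCDF := fun _ _ hxy =>
  ENNReal.toReal_mono (measure_ne_top _ _) (measure_mono (Iic_subset_Iic.2 hxy))

lemma convexOn_stdNormalCDF_neg : ConvexOn ℝ (Ici 0) fun t => stdNormalCDF (-t) := by
  have hderiv (t : ℝ) : HasDerivAt (fun t => stdNormalCDF (-t)) (-gaussianPDFReal 0 1 t) t := by
    have h := (hasDerivAt_stdNormalCDF (-t)).comp t (hasDerivAt_neg t)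
    rwa [mul_neg_one, gaussianPDFReal_zero_neg] at h
  apply MonotoneOn.convexOn_of_deriv (convex_Ici 0)
  · exact fun t _ => (hderiv t).continuousAt.continuousWithinAt
  · exact fun t _ => (hderiv t).differentiableAt.differentiableWithinAt
  · rw [funext fun t => (hderiv t).deriv]
    exact (antitoneOn_gaussianPDFReal 0 1).neg.mono interior_subset

lemma image_const_mul_sqrt_Ici {a : ℝ} (ha : 0 < a) : (fun x => a * √x) '' Ici 0 = Ici 0 := by
  have hsqrt : Real.sqrt '' Ici 0 = Ici 0 := by
    ext y
    refine ⟨?_, fun hy => ⟨y ^ 2, sq_nonneg y, sqrt_sq hy⟩⟩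
    rintro ⟨x, -, rfl⟩
    exact sqrt_nonneg x
  rw [show (fun x => a * √x) = (a * ·) ∘ Real.sqrt from rfl, image_comp, hsqrt,
    image_mul_left_Ici ha, mul_zero]

/-- For every `a > 0`, the function `x ↦ Φ(−a√x)` is convex on `[0, ∞)`. -/
theorem convexOn_stdNormalCDF_neg_sqrt (a : ℝ) (ha : 0 < a) :
    ConvexOn ℝ (Set.Ici (0 : ℝ)) (fun x => stdNormalCDF (-(a * Real.sqrt x))) := by
  have hconcave : ConcaveOn ℝ (Ici 0) fun x => a * √x := by
    simpa only [smul_eq_mul] using strictConcaveOn_sqrt.concaveOn.smul ha.le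
  have hantitone : Antitone fun t => stdNormalCDF (-t) :=
    monotone_stdNormalCDF.comp_antitone fun _ _ h => neg_le_neg h
  refine ConvexOn.comp_concaveOn (g := fun t => stdNormalCDF (-t)) ?_ hconcave
    (hantitone.antitoneOn _)
  rw [image_const_mul_sqrt_Ici ha]
  exact convexOn_stdNormalCDF_neg
end

section
/- Let X be a real random variable with X ~ N(−s²/2, s²), where s > 0. Then E[min{1, exp(X)}] = 2·Φ(−s/2). -/
/-!
Split the expectation at `0`. On `{x > 0}` the integrand is `1`, giving `P(X > 0)`. On `{x ≤ 0}`
it is `eˣ`, and exponential tilting turns `eˣ` times the `N(μ, v)` density into `e^{μ + v/2}`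
times the `N(μ + v, v)` density. For `μ = -v/2` the tilting factor is `1` and the tilted law is
`N(v/2, v)`, the reflection of `N(-v/2, v)` about `0`, so both pieces equal `Φ(-s/2)`.
-/

open MeasureTheory ProbabilityTheory Real

open Set
open scoped NNReal

lemma gaussianReal_map_standardize (μ : ℝ) {v : ℝ≥0} (hv : v ≠ 0) :
    (gaussianReal μ v).map (fun x ↦ (x - μ) / √v) = gaussianReal 0 1 := by
  rw [show (fun x ↦ (x - μ) / √v) = (· / √v) ∘ (· - μ) from rfl,
    ← Measure.map_map (by fun_prop) (by fun_prop), gaussianReal_map_sub_const,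
    gaussianReal_map_div_const, sub_self, zero_div]
  congr 1
  convert div_self hv
  ext
  simp

lemma gaussianReal_real_Iic (μ : ℝ) {v : ℝ≥0} (hv : v ≠ 0) (a : ℝ) :
    (gaussianReal μ v).real (Iic a) = stdNormalCDF ((a - μ) / √v) := by
  have hσ : 0 < √(v : ℝ) := sqrt_pos.2 (by positivity)
  rw [stdNormalCDF, ← gaussianReal_map_standardize μ hv,
    Measure.map_apply (by fun_prop) measurableSet_Iic, measureReal_def]
  congr 2
  ext x
  simp [div_le_div_iff_of_pos_right hσ]

lemma gaussianReal_real_Ioi (μ : ℝ) {v : ℝ≥0} (hv : v ≠ 0) (a : ℝ) :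
    (gaussianReal μ v).real (Ioi a) = stdNormalCDF ((μ - a) / √v) := by
  have : NullSingletonClass (gaussianReal (-μ) v) := nullSingletonClass_gaussianReal hv
  have hpre : Ioi a = (fun x ↦ -x) ⁻¹' Iio (-a) := by ext; simp
  rw [hpre, ← map_measureReal_apply (by fun_prop) measurableSet_Iio, gaussianReal_map_neg,
    measureReal_congr Iio_ae_eq_Iic, gaussianReal_real_Iic _ hv, neg_sub_neg]

lemma exp_mul_gaussianPDFReal (μ : ℝ) (v : ℝ≥0) (x : ℝ) :
    exp x * gaussianPDFReal μ v x = exp (μ + v / 2) * gaussianPDFReal (μ + v) v x := by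
  rcases eq_or_ne v 0 with rfl | hv
  · simp [gaussianPDFReal_zero_var]
  have hv' : (v : ℝ) ≠ 0 := by exact_mod_cast hv
  simp only [gaussianPDFReal]
  rw [mul_left_comm, ← exp_add, mul_left_comm (exp _), ← exp_add]
  congr 2
  field_simp
  ring

lemma setIntegral_exp_gaussianReal (μ : ℝ) {v : ℝ≥0} (hv : v ≠ 0) {t : Set ℝ}
    (ht : MeasurableSet t) :
    ∫ x in t, exp x ∂gaussianReal μ v = exp (μ + v / 2) * (gaussianReal (μ + v) v).real t := by
  rw [← integral_indicator ht, integral_gaussianReal_eq_integral_smul hv, measureReal_def,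
    gaussianReal_apply_eq_integral _ hv, ENNReal.toReal_ofReal
      (setIntegral_nonneg ht fun x _ ↦ gaussianPDFReal_nonneg _ _ x), ← integral_const_mul,
    ← integral_indicator ht]
  congr 1 with x
  by_cases hx : x ∈ t
  · simp [hx, mul_comm (gaussianPDFReal μ v x), exp_mul_gaussianPDFReal]
  · simp [hx]

lemma integral_min_one_exp_eq (ν : Measure ℝ) [IsFiniteMeasure ν] :
    ∫ x, min 1 (exp x) ∂ν = ∫ x in Iic 0, exp x ∂ν + ν.real (Ioi 0) := by
  have hint : Integrable (fun x ↦ min 1 (exp x)) ν :=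
    (integrable_const (1 : ℝ)).mono' (by fun_prop) <| ae_of_all _ fun x ↦ by
      rw [norm_of_nonneg (le_min zero_le_one (exp_pos x).le)]
      exact min_le_left _ _
  rw [← integral_add_compl measurableSet_Iic hint, compl_Iic]
  congr 1
  · exact setIntegral_congr_fun measurableSet_Iic fun x hx ↦ min_eq_right (exp_le_one_iff.2 hx)
  · rw [setIntegral_congr_fun measurableSet_Ioi fun x hx ↦ min_eq_left (one_le_exp hx.le),
      setIntegral_const, smul_eq_mul, mul_one]

lemma integral_min_one_exp_gaussianReal (μ : ℝ) {v : ℝ≥0} (hv : v ≠ 0) :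
    ∫ x, min 1 (exp x) ∂gaussianReal μ v
      = exp (μ + v / 2) * stdNormalCDF (-(μ + v) / √v) + stdNormalCDF (μ / √v) := by
  rw [integral_min_one_exp_eq, setIntegral_exp_gaussianReal μ hv measurableSet_Iic,
    gaussianReal_real_Iic _ hv, gaussianReal_real_Ioi _ hv, zero_sub, sub_zero]

theorem integral_min_one_exp_gaussian_balanced_general
    {Ω : Type*} [MeasureSpace Ω]
    (X : Ω → ℝ) (hXm : Measurable X) (s : ℝ) (hs : 0 < s)
    (hX : Measure.map X ℙ = gaussianReal (-(s ^ 2) / 2) ⟨s ^ 2, sq_nonneg s⟩) :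
    ∫ ω, min 1 (Real.exp (X ω)) ∂ℙ = 2 * stdNormalCDF (-(s / 2)) := by
  set v : ℝ≥0 := ⟨s ^ 2, sq_nonneg s⟩
  have hv_coe : (v : ℝ) = s ^ 2 := rfl
  have hv : v ≠ 0 := by
    rw [← NNReal.coe_ne_zero, hv_coe]
    positivity
  have hσ : √(v : ℝ) = s := by rw [hv_coe, sqrt_sq hs.le]
  have h₀ : -(s ^ 2) / 2 + s ^ 2 / 2 = 0 := by ring
  have h₁ : -(-(s ^ 2) / 2 + s ^ 2) / s = -(s / 2) := by field_simp; ring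
  have h₂ : -(s ^ 2) / 2 / s = -(s / 2) := by field_simp
  rw [← integral_map (f := fun x ↦ min 1 (exp x)) hXm.aemeasurable (by fun_prop), hX,
    integral_min_one_exp_gaussianReal _ hv, hσ, hv_coe, h₀, h₁, h₂, exp_zero, one_mul, two_mul]

/-- For `X ∼ N(−s²/2, s²)` with `s > 0`, `E[min{1, exp X}] = 2 Φ(−s/2)`. -/
theorem integral_min_one_exp_gaussian_balanced
    {Ω : Type*} [MeasureSpace Ω] [IsProbabilityMeasure (ℙ : Measure Ω)]
    (X : Ω → ℝ) (hXm : Measurable X) (s : ℝ) (hs : 0 < s)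
    (hX : Measure.map X ℙ = gaussianReal (-(s ^ 2) / 2) ⟨s ^ 2, sq_nonneg s⟩) :
    ∫ ω, min 1 (Real.exp (X ω)) ∂ℙ = 2 * stdNormalCDF (-(s / 2)) :=
  integral_min_one_exp_gaussian_balanced_general X hXm s hs hX
end
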